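/- (Exact structure of the Kirchhoff-migration imaging function without diagonal data, Theorem 3.1) Let N ≥ 1, let θ_1, …, θ_N ∈ ℝ, and set a_n = (cos θ_n, sin θ_n) ∈ ℝ². Let k ∈ ℂ, let D ⊂ ℝ² be a bounded measurable set, and let O : ℝ² → ℂ be integrable and supported in D. Define the N × N complex matrix 𝔾 by 𝔾_{pq} = ∫_D O(r') e^{− i k (a_p + a_q) · r'} dr' for p ≠ q and 𝔾_{pp} = 0, and define the vector w(r) ∈ ℂ^N by w_n(r) = (1/√N) e^{i k (a_n · r)}. Then for every r ∈ ℝ² with r ∉ closure(D), w(r)ᵀ 𝔾 w(r) = ∫_D O(r') [ N ( J_0(k |r − r'|) + (1/N) Σ_{n=1}^{N} E(θ_n, φ(r,r'), k |r − r'|) )² − ( J_0(2 k |r − r'|) + (1/N) Σ_{n=1}^{N} E(θ_n, φ(r,r'), 2 k |r − r'|) ) ] dr', where φ(r, r') ∈ ℝ is any angle with r − r' = |r − r'| (cos φ(r,r'), sin φ(r,r')), and the integrand on the right-hand side is integrable over D. -/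

import Mathlib

open scoped RealInnerProductSpace

/-- Bessel function of the first kind of integer order `s`, defined by Bessel's integral. -/
noncomputable def besselJ (s : ℤ) (z : ℂ) : ℂ :=
  (1 / (2 * (Real.pi : ℂ))) *
    ∫ τ in (-Real.pi)..Real.pi,
      Complex.exp (Complex.I * (z * (Real.sin τ : ℂ) - (s : ℂ) * (τ : ℂ)))

/-- The error series `E(θ, φ, z) = Σ_{s ∈ ℤ, s ≠ 0} i^s J_s(z) e^{i s (θ − φ)}`. -/
noncomputable def errE (θ φ : ℝ) (z : ℂ) : ℂ :=
  ∑' s : {s : ℤ // s ≠ 0},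
    Complex.I ^ (s : ℤ) * besselJ s z *
      Complex.exp (Complex.I * ((s : ℤ) : ℂ) * ((θ : ℂ) - (φ : ℂ)))

/-!
The Bessel integral says that `J_n(z)` is the `n`-th Fourier coefficient of the `2π`-periodic
function `τ ↦ exp (i z sin τ)`. Integrating by parts twice bounds these coefficients by
`O(1/n²)`, so the Fourier series converges absolutely and pointwise; evaluating it at
`β + π/2` gives the Jacobi–Anger expansion `exp (i z cos β) = Σ_n iⁿ J_n(z) e^{inβ}`, i.e.
`J_0(z) + E(θ, φ, z) = exp (i z cos (θ - φ))`.

With `e_n(r') = exp (i k ⟨a_n, r - r'⟩)` the quadratic form is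
`w(r)ᵀ 𝔾 w(r) = (1/N) ∫_D O(r') Σ_{p ≠ q} e_p(r') e_q(r') dr'`, and
`Σ_{p ≠ q} e_p e_q = (Σ_n e_n)² - Σ_n e_n²`. Since `⟨a_n, r - r'⟩ = |r - r'| cos (θ_n - φ)`,
Jacobi–Anger turns `(1/N) Σ_n e_n` and `(1/N) Σ_n e_n²` into the two brackets of the integrand.
-/

open Complex MeasureTheory
open scoped Real Interval

theorem Summable.add_tsum_subtype_ne {α β : Type*} [AddCommGroup α] [UniformSpace α]
    [IsUniformAddGroup α] [CompleteSpace α] [T2Space α] {f : β → α} (hf : Summable f) (b : β) :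
    f b + ∑' x : {x // x ≠ b}, f x = ∑' x, f x := by
  rw [← hf.tsum_subtype_add_tsum_subtype_compl {b}, tsum_singleton]
  rfl

theorem Finset.sum_sum_ite_eq_sq_sub_sum_sq {ι R : Type*} [Fintype ι] [DecidableEq ι]
    [CommRing R] (x : ι → R) :
    ∑ p, ∑ q, (if p = q then 0 else x p * x q) = (∑ p, x p) ^ 2 - ∑ p, x p ^ 2 := by
  have hdiag p : x p ^ 2 = ∑ q, if p = q then x p * x q else 0 := by simp [sq]
  simp_rw [hdiag, sq, Finset.sum_mul_sum, ← Finset.sum_sub_distrib]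
  congr! 2 with p _ q _
  split_ifs <;> simp

section FourierCoeffOn

variable {a b : ℝ} (hab : a < b) {f f' f'' : ℝ → ℂ}

theorem fourierCoeffOn_of_hasDerivAt_of_eq {n : ℤ} (hn : n ≠ 0) (hfab : f a = f b)
    (hf : ∀ x ∈ [[a, b]], HasDerivAt f (f' x) x) (hf' : IntervalIntegrable f' volume a b) :
    fourierCoeffOn hab f n = (b - a) / (2 * π * I * n) * fourierCoeffOn hab f' n := by
  rw [fourierCoeffOn_of_hasDerivAt hab hn hf hf', hfab, sub_self, mul_zero, zero_sub]
  have : (n : ℂ) ≠ 0 := by exact_mod_cast hn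
  field_simp

theorem norm_fourierCoeffOn_le {C : ℝ} (hC : ∀ x ∈ Ι a b, ‖f x‖ ≤ C) (n : ℤ) :
    ‖fourierCoeffOn hab f n‖ ≤ C := by
  have hba : 0 < b - a := sub_pos.mpr hab
  rw [fourierCoeffOn_eq_integral, norm_smul, Real.norm_of_nonneg (one_div_nonneg.mpr hba.le)]
  calc 1 / (b - a) * ‖∫ x in a..b, fourier (-n) (x : AddCircle (b - a)) • f x‖
      ≤ 1 / (b - a) * (C * |b - a|) := by
        gcongr
        refine intervalIntegral.norm_integral_le_of_norm_le_const fun x hx => ?_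
        rw [norm_smul, fourier_apply, Circle.norm_coe, one_mul]
        exact hC x hx
    _ = C := by
        rw [abs_of_pos hba]
        field_simp

theorem summable_fourierCoeffOn_of_hasDerivAt_two (hfab : f a = f b) (hf'ab : f' a = f' b)
    (hf : ∀ x ∈ [[a, b]], HasDerivAt f (f' x) x) (hf' : ∀ x ∈ [[a, b]], HasDerivAt f' (f'' x) x)
    (hf'' : ContinuousOn f'' [[a, b]]) : Summable (fourierCoeffOn hab f) := by
  obtain ⟨C, hC⟩ := isCompact_uIcc.exists_bound_of_continuousOn hf''
  have hf'int : IntervalIntegrable f' volume a b :=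
    ContinuousOn.intervalIntegrable fun x hx => (hf' x hx).continuousAt.continuousWithinAt
  have hbound (n : ℤ) (hn : n ≠ 0) :
      ‖fourierCoeffOn hab f n‖ ≤ ((b - a) / (2 * π)) ^ 2 * C * (1 / (n : ℝ) ^ 2) := by
    rw [fourierCoeffOn_of_hasDerivAt_of_eq hab hn hfab hf hf'int,
      fourierCoeffOn_of_hasDerivAt_of_eq hab hn hf'ab hf' hf''.intervalIntegrable]
    have hnorm : ‖((b : ℂ) - a) / (2 * π * I * n)‖ = (b - a) / (2 * π) * (1 / |(n : ℝ)|) := by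
      rw [← ofReal_sub, norm_div, norm_real, norm_mul, norm_mul, norm_mul, norm_I, norm_real,
        Real.norm_of_nonneg Real.pi_pos.le, Real.norm_of_nonneg (sub_pos.mpr hab).le,
        norm_intCast]
      norm_num
      field_simp
    have hc := norm_fourierCoeffOn_le hab (fun x hx => hC x (Set.uIoc_subset_uIcc hx)) n
    rw [norm_mul, norm_mul, hnorm, ← mul_assoc, ← sq, mul_pow, one_div_pow, sq_abs,
      mul_right_comm]
    gcongr
  exact Summable.of_norm_bounded_eventually
    ((Real.summable_one_div_int_pow.mpr one_lt_two).mul_left _)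
    (by filter_upwards [Filter.eventually_cofinite_ne 0] with n hn using hbound n hn)

end FourierCoeffOn

section Periodic

variable {T : ℝ} [hT : Fact (0 < T)] {f : ℝ → ℂ}

theorem Function.Periodic.liftIoc_eq_lift (hf : Function.Periodic f T) (a : ℝ) :
    AddCircle.liftIoc T a f = hf.lift := by
  ext y
  conv_rhs => rw [← AddCircle.coe_equivIoc (a := a) (y := y)]
  rw [hf.lift_coe]
  rfl

theorem Function.Periodic.hasSum_fourier_series (hf : Function.Periodic f T) (hc : Continuous f)
    (a : ℝ) (hsum : Summable (fourierCoeffOn (lt_add_of_pos_right a hT.out) f)) (x : ℝ) :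
    HasSum (fun n => fourierCoeffOn (lt_add_of_pos_right a hT.out) f n •
      fourier n (x : AddCircle T)) (f x) := by
  let F : C(AddCircle T, ℂ) := ⟨_, AddCircle.liftIoc_continuous (hf a).symm hc.continuousOn⟩
  have hF : fourierCoeff F = fourierCoeffOn (lt_add_of_pos_right a hT.out) f :=
    funext (fourierCoeff_liftIoc_eq f)
  have hFx : F x = f x := by
    simp only [F, ContinuousMap.coe_mk, hf.liftIoc_eq_lift, hf.lift_coe]
  rw [← hF, ← hFx]
  exact has_pointwise_sum_fourier_series_of_summable (hF ▸ hsum) x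

end Periodic

theorem periodic_exp_mul_sin (z : ℂ) :
    Function.Periodic (fun τ : ℝ => exp (I * z * Real.sin τ)) (2 * π) := fun τ => by
  simp only [Real.sin_add_two_pi]

theorem besselJ_eq_fourierCoeffOn (n : ℤ) (z : ℂ) :
    besselJ n z = fourierCoeffOn (lt_add_of_pos_right (-π) Real.two_pi_pos)
      (fun τ => exp (I * z * Real.sin τ)) n := by
  have hπ : -π + 2 * π = π := by ring
  rw [fourierCoeffOn_eq_integral, besselJ, hπ, sub_neg_eq_add, ← two_mul, real_smul]
  push_cast
  congr 1
  refine intervalIntegral.integral_congr fun τ _ => ?_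
  rw [fourier_coe_apply, smul_eq_mul, ← exp_add]
  congr 1
  push_cast
  field_simp
  ring

theorem summable_besselJ (z : ℂ) : Summable fun n : ℤ => besselJ n z := by
  set f : ℝ → ℂ := fun τ => exp (I * z * Real.sin τ)
  set f' : ℝ → ℂ := fun τ => I * z * Real.cos τ * f τ
  set f'' : ℝ → ℂ := fun τ => (I * z * -Real.sin τ + (I * z * Real.cos τ) ^ 2) * f τ
  have hf τ : HasDerivAt f (f' τ) τ :=
    ((((Real.hasDerivAt_sin τ).ofReal_comp).const_mul (I * z)).cexp).congr_deriv (mul_comm _ _)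
  have hf' τ : HasDerivAt f' (f'' τ) τ :=
    ((((Real.hasDerivAt_cos τ).ofReal_comp).const_mul (I * z)).mul (hf τ)).congr_deriv
      (by simp only [f'', f', ofReal_neg]; ring)
  have hper : Function.Periodic f (2 * π) := periodic_exp_mul_sin z
  have hper' : Function.Periodic f' (2 * π) := fun τ => by
    simp only [f', hper τ, Real.cos_add_two_pi]
  simp_rw [besselJ_eq_fourierCoeffOn]
  exact summable_fourierCoeffOn_of_hasDerivAt_two _ (hper _).symm (hper' _).symm
    (fun τ _ => hf τ) (fun τ _ => hf' τ) (by fun_prop)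

theorem hasSum_jacobiAnger (z : ℂ) (β : ℝ) :
    HasSum (fun n : ℤ => I ^ n * besselJ n z * exp (I * n * β)) (exp (I * z * Real.cos β)) := by
  have : Fact (0 < 2 * π) := ⟨Real.two_pi_pos⟩
  have h := (periodic_exp_mul_sin z).hasSum_fourier_series (by fun_prop) (-π)
    (by simpa only [← funext fun n => besselJ_eq_fourierCoeffOn n z] using summable_besselJ z)
    (β + π / 2)
  simp only [← besselJ_eq_fourierCoeffOn, Real.sin_add_pi_div_two] at h
  convert h using 2 with n
  have hphase : exp (2 * π * I * n * (β + π / 2 : ℝ) / (2 * π : ℝ)) =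
      I ^ n * exp (I * n * β) := by
    rw [show I ^ n = exp (n * (π / 2 * I)) by rw [exp_int_mul, exp_pi_div_two_mul_I], ← exp_add]
    congr 1
    push_cast
    field_simp
    ring
  rw [fourier_coe_apply, smul_eq_mul, hphase]
  ring

theorem besselJ_zero_add_errE (θ φ : ℝ) (z : ℂ) :
    besselJ 0 z + errE θ φ z = exp (I * z * Real.cos (θ - φ)) := by
  have h := hasSum_jacobiAnger z (θ - φ)
  rw [ofReal_sub] at h
  rw [← h.tsum_eq, ← h.summable.add_tsum_subtype_ne 0]
  congr 1
  simp

theorem exp_inner_cos_sin_of_eq_norm_smul (k : ℂ) (θ φ : ℝ) {x : EuclideanSpace ℝ (Fin 2)}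
    (hx : x = ‖x‖ • (WithLp.toLp 2 ![Real.cos φ, Real.sin φ] : EuclideanSpace ℝ (Fin 2))) :
    exp (I * k * ⟪(WithLp.toLp 2 ![Real.cos θ, Real.sin θ] : EuclideanSpace ℝ (Fin 2)), x⟫) =
      exp (I * (k * ‖x‖) * Real.cos (θ - φ)) := by
  have hinner : ⟪(WithLp.toLp 2 ![Real.cos θ, Real.sin θ] : EuclideanSpace ℝ (Fin 2)), x⟫ =
      ‖x‖ * Real.cos (θ - φ) := by
    conv_lhs => rw [hx]
    simp only [PiLp.inner_apply, PiLp.smul_apply, smul_eq_mul, RCLike.inner_apply,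
      Real.ringHom_apply, Fin.sum_univ_two, Matrix.cons_val_zero, Matrix.cons_val_one,
      Real.cos_sub]
    ring
  rw [hinner]
  push_cast
  ring_nf

theorem mul_setIntegral_exp_inner_mul {F : Type*} [NormedAddCommGroup F] [InnerProductSpace ℝ F]
    [MeasurableSpace F] {μ : Measure F} (D : Set F) (O : F → ℂ) (k c : ℂ) (u v x : F) :
    c * exp (I * k * ⟪u, x⟫) * (∫ y in D, O y * exp (-(I * k * ⟪u + v, y⟫)) ∂μ) *
        (c * exp (I * k * ⟪v, x⟫)) =
      ∫ y in D, O y * (c ^ 2 * (exp (I * k * ⟪u, x - y⟫) * exp (I * k * ⟪v, x - y⟫))) ∂μ := by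
  have hphase y : exp (I * k * ⟪u, x - y⟫) * exp (I * k * ⟪v, x - y⟫) =
      exp (I * k * ⟪u, x⟫) * exp (-(I * k * ⟪u + v, y⟫)) * exp (I * k * ⟪v, x⟫) := by
    simp only [inner_add_left, inner_sub_right, ofReal_add, ofReal_sub, ← exp_add]
    ring_nf
  rw [← integral_const_mul, ← integral_mul_const]
  congr 1 with y
  rw [hphase]
  ring

theorem offDiag_sum_exp_cos_eq_besselJ_errE {N : ℕ} (hN : (N : ℂ) ≠ 0) (θ : Fin N → ℝ) (φ : ℝ)
    (z : ℂ) :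
    1 / (N : ℂ) * ∑ p, ∑ q, (if p = q then 0 else
        exp (I * z * Real.cos (θ p - φ)) * exp (I * z * Real.cos (θ q - φ))) =
      N * (besselJ 0 z + 1 / N * ∑ n, errE (θ n) φ z) ^ 2 -
        (besselJ 0 (2 * z) + 1 / N * ∑ n, errE (θ n) φ (2 * z)) := by
  have hmean (z : ℂ) : besselJ 0 z + 1 / N * ∑ n, errE (θ n) φ z =
      1 / N * ∑ n, exp (I * z * Real.cos (θ n - φ)) := by
    simp_rw [← besselJ_zero_add_errE, Finset.sum_add_distrib, Finset.sum_const, Finset.card_univ,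
      Fintype.card_fin, nsmul_eq_mul]
    field_simp
  have hsq (n : Fin N) : exp (I * (2 * z) * Real.cos (θ n - φ)) =
      exp (I * z * Real.cos (θ n - φ)) ^ 2 := by
    rw [sq, ← exp_add]; ring_nf
  rw [hmean, hmean, Finset.sum_sum_ite_eq_sq_sub_sum_sq]
  simp_rw [hsq]
  field_simp

theorem stmt5_general (N : ℕ) (hN : 1 ≤ N) (θ : Fin N → ℝ)
    (a : Fin N → EuclideanSpace ℝ (Fin 2))
    (ha : ∀ n, a n = (WithLp.toLp 2 ![Real.cos (θ n), Real.sin (θ n)] : EuclideanSpace ℝ (Fin 2)))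
    (k : ℂ)
    (D : Set (EuclideanSpace ℝ (Fin 2))) (hD : MeasurableSet D)
    (hDbdd : Bornology.IsBounded D)
    (O : EuclideanSpace ℝ (Fin 2) → ℂ) (hO : MeasureTheory.Integrable O)
    (G : Matrix (Fin N) (Fin N) ℂ)
    (hG : ∀ p q : Fin N, G p q = if p = q then 0 else
      ∫ r' in D, O r' * Complex.exp (-(Complex.I * k * ((⟪a p + a q, r'⟫ : ℝ) : ℂ))))
    (w : EuclideanSpace ℝ (Fin 2) → Fin N → ℂ)
    (hw : ∀ r n, w r n = (1 / ((Real.sqrt N : ℝ) : ℂ)) *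
      Complex.exp (Complex.I * k * ((⟪a n, r⟫ : ℝ) : ℂ)))
    (r : EuclideanSpace ℝ (Fin 2))
    (φ : EuclideanSpace ℝ (Fin 2) → ℝ)
    (hφ : ∀ r' ∈ D, r - r' =
      ‖r - r'‖ • (WithLp.toLp 2 ![Real.cos (φ r'), Real.sin (φ r')] : EuclideanSpace ℝ (Fin 2))) :
    ((∑ p : Fin N, ∑ q : Fin N, w r p * G p q * w r q) =
      ∫ r' in D, O r' *
        ((N : ℂ) * (besselJ 0 (k * (‖r - r'‖ : ℂ)) +
            (1 / (N : ℂ)) * ∑ n : Fin N, errE (θ n) (φ r') (k * (‖r - r'‖ : ℂ))) ^ 2 -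
          (besselJ 0 (2 * k * (‖r - r'‖ : ℂ)) +
            (1 / (N : ℂ)) * ∑ n : Fin N, errE (θ n) (φ r') (2 * k * (‖r - r'‖ : ℂ))))) ∧
    MeasureTheory.IntegrableOn (fun r' => O r' *
        ((N : ℂ) * (besselJ 0 (k * (‖r - r'‖ : ℂ)) +
            (1 / (N : ℂ)) * ∑ n : Fin N, errE (θ n) (φ r') (k * (‖r - r'‖ : ℂ))) ^ 2 -
          (besselJ 0 (2 * k * (‖r - r'‖ : ℂ)) +
            (1 / (N : ℂ)) * ∑ n : Fin N, errE (θ n) (φ r') (2 * k * (‖r - r'‖ : ℂ))))) D := by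
  have hN0 : (N : ℂ) ≠ 0 := by exact_mod_cast (by omega : N ≠ 0)
  set e : Fin N → EuclideanSpace ℝ (Fin 2) → ℂ := fun n r' => exp (I * k * ⟪a n, r - r'⟫)
  set g : Fin N → Fin N → EuclideanSpace ℝ (Fin 2) → ℂ :=
    fun p q r' => O r' * (1 / N * if p = q then 0 else e p r' * e q r')
  have hg_int p q : IntegrableOn (g p q) D :=
    hO.integrableOn.mul_continuousOn_of_subset
      (by split_ifs <;> fun_prop : Continuous _).continuousOn hD hDbdd.isCompact_closure
      subset_closure
  have hentry p q : w r p * G p q * w r q = ∫ r' in D, g p q r' := by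
    rcases eq_or_ne p q with rfl | hpq
    · simp [g, hG]
    have hsqrt : (1 / ((√N : ℝ) : ℂ)) ^ 2 = 1 / N := by
      rw [div_pow, one_pow, ← ofReal_pow, Real.sq_sqrt (Nat.cast_nonneg N), ofReal_natCast]
    simp only [hG, hw, if_neg hpq, mul_setIntegral_exp_inner_mul, hsqrt, g, e]
  have hsum : ∑ p, ∑ q, w r p * G p q * w r q = ∫ r' in D, ∑ p, ∑ q, g p q r' := by
    simp_rw [hentry, integral_finsetSum _ fun p _ => integrable_finsetSum _ fun q _ => hg_int p q,
      integral_finsetSum _ fun q _ => hg_int _ q]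
  rw [hsum]
  have hsum_int : IntegrableOn (fun r' => ∑ p, ∑ q, g p q r') D :=
    integrable_finsetSum _ fun p _ => integrable_finsetSum _ fun q _ => hg_int p q
  refine ⟨setIntegral_congr_fun hD ?_, hsum_int.congr_fun ?_ hD⟩ <;>
  · intro r' hr'
    beta_reduce
    rw [mul_assoc 2 k, ← offDiag_sum_exp_cos_eq_besselJ_errE hN0, Finset.mul_sum, Finset.mul_sum]
    simp only [g, e, ha, exp_inner_cos_sin_of_eq_norm_smul _ _ _ (hφ r' hr'), Finset.mul_sum]

/-- Exact structure of the Kirchhoff-migration imaging function without diagonal data: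
`w(r)ᵀ 𝔾 w(r) = ∫_D O(r') [N (J_0(k|r−r'|) + (1/N) Σ_n E(θ_n, φ(r'), k|r−r'|))²
  − (J_0(2k|r−r'|) + (1/N) Σ_n E(θ_n, φ(r'), 2k|r−r'|))] dr'`,
the integrand being integrable on `D`. -/
theorem stmt5 (N : ℕ) (hN : 1 ≤ N) (θ : Fin N → ℝ)
    (a : Fin N → EuclideanSpace ℝ (Fin 2))
    (ha : ∀ n, a n = (WithLp.toLp 2 ![Real.cos (θ n), Real.sin (θ n)] : EuclideanSpace ℝ (Fin 2)))
    (k : ℂ)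
    (D : Set (EuclideanSpace ℝ (Fin 2))) (hD : MeasurableSet D)
    (hDbdd : Bornology.IsBounded D)
    (O : EuclideanSpace ℝ (Fin 2) → ℂ) (hO : MeasureTheory.Integrable O)
    (hOsupp : ∀ x, x ∉ D → O x = 0)
    (G : Matrix (Fin N) (Fin N) ℂ)
    (hG : ∀ p q : Fin N, G p q = if p = q then 0 else
      ∫ r' in D, O r' * Complex.exp (-(Complex.I * k * ((⟪a p + a q, r'⟫ : ℝ) : ℂ))))
    (w : EuclideanSpace ℝ (Fin 2) → Fin N → ℂ)
    (hw : ∀ r n, w r n = (1 / ((Real.sqrt N : ℝ) : ℂ)) *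
      Complex.exp (Complex.I * k * ((⟪a n, r⟫ : ℝ) : ℂ)))
    (r : EuclideanSpace ℝ (Fin 2)) (hr : r ∉ closure D)
    (φ : EuclideanSpace ℝ (Fin 2) → ℝ)
    (hφ : ∀ r' ∈ D, r - r' =
      ‖r - r'‖ • (WithLp.toLp 2 ![Real.cos (φ r'), Real.sin (φ r')] : EuclideanSpace ℝ (Fin 2))) :
    ((∑ p : Fin N, ∑ q : Fin N, w r p * G p q * w r q) =
      ∫ r' in D, O r' *
        ((N : ℂ) * (besselJ 0 (k * (‖r - r'‖ : ℂ)) +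
            (1 / (N : ℂ)) * ∑ n : Fin N, errE (θ n) (φ r') (k * (‖r - r'‖ : ℂ))) ^ 2 -
          (besselJ 0 (2 * k * (‖r - r'‖ : ℂ)) +
            (1 / (N : ℂ)) * ∑ n : Fin N, errE (θ n) (φ r') (2 * k * (‖r - r'‖ : ℂ))))) ∧
    MeasureTheory.IntegrableOn (fun r' => O r' *
        ((N : ℂ) * (besselJ 0 (k * (‖r - r'‖ : ℂ)) +
            (1 / (N : ℂ)) * ∑ n : Fin N, errE (θ n) (φ r') (k * (‖r - r'‖ : ℂ))) ^ 2 -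
          (besselJ 0 (2 * k * (‖r - r'‖ : ℂ)) +
            (1 / (N : ℂ)) * ∑ n : Fin N, errE (θ n) (φ r') (2 * k * (‖r - r'‖ : ℂ))))) D :=
  stmt5_general N hN θ a ha k D hD hDbdd O hO G hG w hw r φ hφ
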